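/- arXiv:2204.13013 — 3 statements merged into one kernel-verified Lean document; each statement's English description precedes it below -/
import Mathlib

section
/- Let A be an n×n real matrix, B an n×m real matrix, Q an n×n real symmetric matrix, N ≥ 2, and let P_1, …, P_N be n×n real symmetric matrices, η_1, …, η_N, q_1, …, q_N ∈ ℝⁿ, and ξ_1, …, ξ_{N−1} ∈ ℝ, satisfying P_N = Q, η_N = q_N, and such that for each t = 1, …, N−1 the symmetric block matrix H_t := [[R_t, S_t, g_t], [S_tᵀ, AᵀP_{t+1}A + Q − P_t, β_t], [g_tᵀ, β_tᵀ, ξ_t]] is positive semidefinite, where R_t := BᵀP_{t+1}B + I, S_t := BᵀP_{t+1}A, g_t := Bᵀη_{t+1}, and β_t := q_t + Aᵀη_{t+1} − η_t. Then for every sequence x_1, …, x_N ∈ ℝⁿ and u_1, …, u_{N−1} ∈ ℝᵐ with x_{t+1} = A x_t + B u_t for t = 1, …, N−1, it holds that ½x_NᵀQx_N + q_NᵀxN − ½x_1ᵀP_1x_1 − η_1ᵀx_1 + Σ_{t=1}^{N−1}(½ξ_t + ½x_tᵀQx_t + q_tᵀx_t) ≥ −½ Σ_{t=1}^{N−1}‖u_t‖².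 -/
/-!
With the value functions `V_t(x) = ½ xᵀ P_t x + η_tᵀ x`, the quadratic form of `H_t` at the
block vector `(u_t, x_t, 1)` is, after merging the two cross terms by the symmetry of `P_{t+1}`,
twice `V_{t+1}(x_{t+1}) - V_t(x_t) + ½ ξ_t + ½ x_tᵀ Q x_t + q_tᵀ x_t + ½ ‖u_t‖²`. Summing these
nonnegative quantities telescopes the value functions to `V_N(x_N) - V_1(x_1)`, and `V_N` is the
terminal cost because `P_N = Q` and `η_N = q_N`.
-/

open Matrix Finset

variable {ι κ : Type*} [Fintype ι] [Fintype κ]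

theorem Matrix.transpose_mul_mul_apply_comm {α o p : Type*} [CommSemiring α]
    (a : Matrix κ o α) (M : Matrix κ ι α) (b : Matrix ι p α) (i : o) (j : p) :
    (aᵀ * M * b) i j = (bᵀ * Mᵀ * a) j i := by
  rw [← transpose_apply (bᵀ * Mᵀ * a), transpose_mul, transpose_mul, transpose_transpose,
    transpose_transpose, Matrix.mul_assoc]

theorem Matrix.transpose_mul_apply_comm {α o p : Type*} [CommSemiring α] (a : Matrix κ o α)
    (b : Matrix κ p α) (i : o) (j : p) : (aᵀ * b) i j = (bᵀ * a) j i := by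
  rw [← transpose_apply (bᵀ * a), transpose_mul, transpose_transpose]

theorem Matrix.PosSemidef.quadratic_nonneg_of_fromBlocks
    {R : Matrix ι ι ℝ} {S : Matrix ι κ ℝ} {g : Matrix ι (Fin 1) ℝ} {M : Matrix κ κ ℝ}
    {β : Matrix κ (Fin 1) ℝ} {ξ : ℝ}
    (hH : (fromBlocks R (fromCols S g) (fromRows Sᵀ gᵀ) (fromBlocks M β βᵀ (ξ • 1))).PosSemidef)
    (u : Matrix ι (Fin 1) ℝ) (x : Matrix κ (Fin 1) ℝ) :
    0 ≤ (uᵀ * R * u) 0 0 + 2 * (uᵀ * S * x) 0 0 + 2 * (gᵀ * u) 0 0 + (xᵀ * M * x) 0 0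
      + 2 * (βᵀ * x) 0 0 + ξ := by
  have h := (hH.conjTranspose_mul_mul_same (fromRows u (fromRows x 1))).diag_nonneg (i := 0)
  simp only [conjTranspose_eq_transpose_of_trivial, transpose_fromRows, Matrix.mul_assoc,
    fromBlocks_mul_fromRows, fromRows_mul, fromCols_mul_fromRows, Matrix.mul_add, Matrix.add_apply,
    Matrix.mul_one, Matrix.mul_smul, transpose_one, Matrix.one_mul] at h
  have hS : (xᵀ * (Sᵀ * u)) 0 0 = (uᵀ * (S * x)) 0 0 := by
    rw [← Matrix.mul_assoc, transpose_mul_mul_apply_comm, transpose_transpose, Matrix.mul_assoc]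
  rw [hS, transpose_mul_apply_comm u g, transpose_mul_apply_comm x β] at h
  simp only [Matrix.mul_assoc, smul_apply, one_apply_eq, smul_eq_mul, mul_one] at h ⊢
  linarith

noncomputable def quadraticValue (P : Matrix κ κ ℝ) (η x : Matrix κ (Fin 1) ℝ) : ℝ :=
  1 / 2 * (xᵀ * P * x) 0 0 + (ηᵀ * x) 0 0

theorem quadraticValue_le_of_posSemidef_fromBlocks [DecidableEq ι] {A Q P P' : Matrix κ κ ℝ}
    {B : Matrix κ ι ℝ} {η η' q : Matrix κ (Fin 1) ℝ} {ξ : ℝ} (hP' : P'.IsSymm)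
    (hH : (fromBlocks (Bᵀ * P' * B + 1) (fromCols (Bᵀ * P' * A) (Bᵀ * η'))
      (fromRows (Bᵀ * P' * A)ᵀ (Bᵀ * η')ᵀ)
      (fromBlocks (Aᵀ * P' * A + Q - P) (q + Aᵀ * η' - η) (q + Aᵀ * η' - η)ᵀ
        (ξ • 1))).PosSemidef)
    (x : Matrix κ (Fin 1) ℝ) (u : Matrix ι (Fin 1) ℝ) :
    quadraticValue P η x ≤ quadraticValue P' η' (A * x + B * u) +
      (1 / 2 * ξ + 1 / 2 * (xᵀ * Q * x) 0 0 + (qᵀ * x) 0 0 + 1 / 2 * (uᵀ * u) 0 0) := by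
  have h := hH.quadratic_nonneg_of_fromBlocks u x
  have hcross : (xᵀ * (Aᵀ * (P' * (B * u)))) 0 0 = (uᵀ * (Bᵀ * (P' * (A * x)))) 0 0 := by
    rw [show xᵀ * (Aᵀ * (P' * (B * u))) = xᵀ * (Aᵀ * P' * B) * u by simp only [Matrix.mul_assoc],
      transpose_mul_mul_apply_comm]
    simp only [transpose_mul, transpose_transpose, hP'.eq, Matrix.mul_assoc]
  unfold quadraticValue
  simp only [transpose_add, transpose_sub, transpose_mul, transpose_transpose, Matrix.mul_add,
    Matrix.add_mul, Matrix.mul_sub, Matrix.sub_mul, Matrix.mul_assoc, Matrix.add_apply,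
    Matrix.sub_apply, Matrix.mul_one] at h ⊢
  linarith

theorem lower_bound_from_psd_blocks_general {n m : ℕ}
    (A : Matrix (Fin n) (Fin n) ℝ) (B : Matrix (Fin n) (Fin m) ℝ)
    (Q : Matrix (Fin n) (Fin n) ℝ)
    (N : ℕ) (hN : 2 ≤ N)
    (P : ℕ → Matrix (Fin n) (Fin n) ℝ) (hPsym : ∀ t, 1 ≤ t → t ≤ N → (P t).IsSymm)
    (η q : ℕ → Matrix (Fin n) (Fin 1) ℝ) (ξ : ℕ → ℝ)
    (hPN : P N = Q) (hηN : η N = q N)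
    (hH : ∀ t, 1 ≤ t → t ≤ N - 1 →
      (fromBlocks (Bᵀ * P (t + 1) * B + 1)
          (fromCols (Bᵀ * P (t + 1) * A) (Bᵀ * η (t + 1)))
          (fromRows (Bᵀ * P (t + 1) * A)ᵀ (Bᵀ * η (t + 1))ᵀ)
          (fromBlocks (Aᵀ * P (t + 1) * A + Q - P t)
            (q t + Aᵀ * η (t + 1) - η t)
            (q t + Aᵀ * η (t + 1) - η t)ᵀ
            (ξ t • (1 : Matrix (Fin 1) (Fin 1) ℝ)))).PosSemidef) :
    ∀ (x : ℕ → Matrix (Fin n) (Fin 1) ℝ) (u : ℕ → Matrix (Fin m) (Fin 1) ℝ),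
      (∀ t, 1 ≤ t → t ≤ N - 1 → x (t + 1) = A * x t + B * u t) →
      (1 / 2 : ℝ) * ((x N)ᵀ * Q * x N : Matrix (Fin 1) (Fin 1) ℝ) 0 0 +
          ((q N)ᵀ * x N : Matrix (Fin 1) (Fin 1) ℝ) 0 0 -
          (1 / 2 : ℝ) * ((x 1)ᵀ * P 1 * x 1 : Matrix (Fin 1) (Fin 1) ℝ) 0 0 -
          ((η 1)ᵀ * x 1 : Matrix (Fin 1) (Fin 1) ℝ) 0 0 +
          ∑ t ∈ Icc 1 (N - 1),
            ((1 / 2 : ℝ) * ξ t +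
              (1 / 2 : ℝ) * ((x t)ᵀ * Q * x t : Matrix (Fin 1) (Fin 1) ℝ) 0 0 +
              ((q t)ᵀ * x t : Matrix (Fin 1) (Fin 1) ℝ) 0 0) ≥
        -(1 / 2 : ℝ) * ∑ t ∈ Icc 1 (N - 1),
            ((u t)ᵀ * u t : Matrix (Fin 1) (Fin 1) ℝ) 0 0 := by
  intro x u hx
  set V : ℕ → ℝ := fun t => quadraticValue (P t) (η t) (x t) with hV
  have hstep : ∀ t ∈ Icc 1 (N - 1), V t - V (t + 1) ≤
      1 / 2 * ξ t + 1 / 2 * ((x t)ᵀ * Q * x t) 0 0 + ((q t)ᵀ * x t) 0 0 +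
        1 / 2 * ((u t)ᵀ * u t) 0 0 := by
    intro t ht
    obtain ⟨ht1, htN⟩ := mem_Icc.mp ht
    have h := quadraticValue_le_of_posSemidef_fromBlocks (hPsym (t + 1) (by omega) (by omega))
      (hH t ht1 htN) (x t) (u t)
    rw [← hx t ht1 htN] at h
    linarith
  have htelescope : ∑ t ∈ Icc 1 (N - 1), (V (t + 1) - V t) = V N - V 1 := by
    rw [sum_Icc_sub (by omega), Nat.sub_add_cancel (by omega)]
  have hsum := sum_le_sum hstep
  rw [sum_sub_distrib] at hsum htelescope
  rw [sum_add_distrib, ← mul_sum] at hsum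
  simp only [hV, quadraticValue, hPN, hηN] at hsum htelescope
  linarith

/-- If `P_N = Q`, `η_N = q_N`, and each block matrix
`H_t = [[R_t, S_t, g_t], [S_tᵀ, AᵀP_{t+1}A + Q − P_t, β_t], [g_tᵀ, β_tᵀ, ξ_t]]` is
positive semidefinite, then along any trajectory `x_{t+1} = A x_t + B u_t`:
`½x_NᵀQx_N + q_Nᵀx_N − ½x_1ᵀP_1x_1 − η_1ᵀx_1 + Σ_{t=1}^{N−1}(½ξ_t + ½x_tᵀQx_t + q_tᵀx_t)
  ≥ −½ Σ_{t=1}^{N−1}‖u_t‖²`. -/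
theorem lower_bound_from_psd_blocks {n m : ℕ}
    (A : Matrix (Fin n) (Fin n) ℝ) (B : Matrix (Fin n) (Fin m) ℝ)
    (Q : Matrix (Fin n) (Fin n) ℝ) (hQ : Q.IsSymm)
    (N : ℕ) (hN : 2 ≤ N)
    (P : ℕ → Matrix (Fin n) (Fin n) ℝ) (hPsym : ∀ t, 1 ≤ t → t ≤ N → (P t).IsSymm)
    (η q : ℕ → Matrix (Fin n) (Fin 1) ℝ) (ξ : ℕ → ℝ)
    (hPN : P N = Q) (hηN : η N = q N)
    (hH : ∀ t, 1 ≤ t → t ≤ N - 1 →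
      (fromBlocks (Bᵀ * P (t + 1) * B + 1)
          (fromCols (Bᵀ * P (t + 1) * A) (Bᵀ * η (t + 1)))
          (fromRows (Bᵀ * P (t + 1) * A)ᵀ (Bᵀ * η (t + 1))ᵀ)
          (fromBlocks (Aᵀ * P (t + 1) * A + Q - P t)
            (q t + Aᵀ * η (t + 1) - η t)
            (q t + Aᵀ * η (t + 1) - η t)ᵀ
            (ξ t • (1 : Matrix (Fin 1) (Fin 1) ℝ)))).PosSemidef) :
    ∀ (x : ℕ → Matrix (Fin n) (Fin 1) ℝ) (u : ℕ → Matrix (Fin m) (Fin 1) ℝ),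
      (∀ t, 1 ≤ t → t ≤ N - 1 → x (t + 1) = A * x t + B * u t) →
      (1 / 2 : ℝ) * ((x N)ᵀ * Q * x N : Matrix (Fin 1) (Fin 1) ℝ) 0 0 +
          ((q N)ᵀ * x N : Matrix (Fin 1) (Fin 1) ℝ) 0 0 -
          (1 / 2 : ℝ) * ((x 1)ᵀ * P 1 * x 1 : Matrix (Fin 1) (Fin 1) ℝ) 0 0 -
          ((η 1)ᵀ * x 1 : Matrix (Fin 1) (Fin 1) ℝ) 0 0 +
          ∑ t ∈ Icc 1 (N - 1),
            ((1 / 2 : ℝ) * ξ t +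
              (1 / 2 : ℝ) * ((x t)ᵀ * Q * x t : Matrix (Fin 1) (Fin 1) ℝ) 0 0 +
              ((q t)ᵀ * x t : Matrix (Fin 1) (Fin 1) ℝ) 0 0) ≥
        -(1 / 2 : ℝ) * ∑ t ∈ Icc 1 (N - 1),
            ((u t)ᵀ * u t : Matrix (Fin 1) (Fin 1) ℝ) 0 0 :=
  lower_bound_from_psd_blocks_general A B Q N hN P hPsym η q ξ hPN hηN hH
end

section
/- Let A be an invertible n×n real matrix, B an n×m real matrix, and P an n×n real positive semidefinite matrix. Then the closed-loop matrix A − B(BᵀPB + I)⁻¹BᵀPA is invertible; indeed it equals (I + BBᵀP)⁻¹A. -/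
open Matrix

/-- For `A` invertible and `P ⪰ 0`, the closed-loop matrix
`A − B(BᵀPB + I)⁻¹BᵀPA` is invertible; indeed it equals `(I + BBᵀP)⁻¹A`. -/
theorem closed_loop_invertible {n m : ℕ}
    (A : Matrix (Fin n) (Fin n) ℝ) (hA : IsUnit A)
    (B : Matrix (Fin n) (Fin m) ℝ)
    (P : Matrix (Fin n) (Fin n) ℝ) (hP : P.PosSemidef) :
    IsUnit (A - B * (Bᵀ * P * B + 1)⁻¹ * (Bᵀ * P * A)) ∧
      A - B * (Bᵀ * P * B + 1)⁻¹ * (Bᵀ * P * A) = (1 + B * Bᵀ * P)⁻¹ * A := by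
  -- `BᵀPB + 1` is positive definite, hence invertible
  have hpsd : (Bᵀ * P * B).PosSemidef := by
    have := hP.conjTranspose_mul_mul_same B
    simpa using this
  have hMpd : (Bᵀ * P * B + 1).PosDef :=
    Matrix.PosDef.posSemidef_add hpsd Matrix.PosDef.one
  have hMdet : IsUnit (Bᵀ * P * B + 1).det := hMpd.det_pos.ne'.isUnit
  have hM : (Bᵀ * P * B + 1) * (Bᵀ * P * B + 1)⁻¹ = 1 :=
    Matrix.mul_nonsing_inv _ hMdet
  -- `1 + BBᵀP` has nonzero determinant by Weinstein–Aronszajn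
  have hNdet : IsUnit (1 + B * Bᵀ * P).det := by
    have h1 : (1 + B * Bᵀ * P).det = (Bᵀ * P * B + 1).det := by
      rw [add_comm (1 : Matrix (Fin n) (Fin n) ℝ), Matrix.mul_assoc,
        Matrix.det_mul_add_one_comm, Matrix.mul_assoc]
    rw [h1]; exact hMdet
  have h : Bᵀ * P * B * (Bᵀ * P * B + 1)⁻¹ = 1 - (Bᵀ * P * B + 1)⁻¹ := by
    have h2 := hM
    rw [add_mul, one_mul] at h2
    exact eq_sub_of_add_eq h2
  have key : ∀ Q : Matrix (Fin m) (Fin m) ℝ, Bᵀ * P * B * Q = 1 - Q →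
      (1 + B * Bᵀ * P) * (A - B * Q * (Bᵀ * P * A)) = A := by
    intro Q hQ
    have hQ2 : Bᵀ * (P * (B * (Q * (Bᵀ * (P * A))))) =
        Bᵀ * (P * A) - Q * (Bᵀ * (P * A)) := by
      have h3 := congrArg (· * (Bᵀ * (P * A))) hQ
      simpa [Matrix.mul_assoc, Matrix.sub_mul] using h3
    simp only [Matrix.mul_sub, Matrix.sub_mul, Matrix.mul_add, Matrix.add_mul,
      Matrix.one_mul, Matrix.mul_assoc, hQ2]
    abel
  have key' := key _ h
  haveI := Matrix.invertibleOfIsUnitDet _ hNdet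
  have heq : A - B * (Bᵀ * P * B + 1)⁻¹ * (Bᵀ * P * A) = (1 + B * Bᵀ * P)⁻¹ * A := by
    rw [eq_comm, Matrix.inv_mul_eq_iff_eq_mul_of_invertible]
    exact key'.symm
  refine ⟨?_, heq⟩
  have hU : IsUnit ((1 + B * Bᵀ * P) * (A - B * (Bᵀ * P * B + 1)⁻¹ * (Bᵀ * P * A))) :=
    by rw [key']; exact hA
  rw [Matrix.isUnit_iff_isUnit_det, Matrix.det_mul] at hU
  rw [Matrix.isUnit_iff_isUnit_det]
  exact isUnit_of_mul_isUnit_right hU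
end

section
/- Let A be an invertible n×n real matrix and B an n×m real matrix of full column rank such that the pair (A, B) is controllable, i.e. the only vector v ∈ ℝⁿ with vᵀAᵏB = 0 for all k = 0, 1, …, n−1 is v = 0. Let N ≥ n+1, let Q and Q′ be n×n real positive semidefinite matrices, and let P_{1:N}, P′_{1:N} be the corresponding backward Riccati sequences: P_N = Q, P_t = AᵀP_{t+1}A + Q − AᵀP_{t+1}B(BᵀP_{t+1}B + I)⁻¹BᵀP_{t+1}A for t = N−1, …, 1, and analogously for P′ with Q′. If Bᵀ P_t = Bᵀ P′_t for all t = 2, …, N, then Q = Q′ (and consequently P_t = P′_t for all t). -/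
open Matrix

/-- If `(A, B)` is controllable, `A` is invertible, `B` has full column rank, and `N ≥ n+1`,
then the backward Riccati sequences `P`, `P′` generated from positive semidefinite `Q`, `Q′`
satisfy: `BᵀP_t = BᵀP′_t` for all `t = 2, …, N` implies `Q = Q′` (and `P_t = P′_t` for all `t`). -/
theorem riccati_identifiability {n m : ℕ}
    (A : Matrix (Fin n) (Fin n) ℝ) (hA : IsUnit A)
    (B : Matrix (Fin n) (Fin m) ℝ)
    (hBrank : Function.Injective B.mulVec)
    (hctrb : ∀ v : Fin n → ℝ, (∀ k, k < n → v ᵥ* (A ^ k * B) = 0) → v = 0)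
    (N : ℕ) (hN : n + 1 ≤ N)
    (Q Q' : Matrix (Fin n) (Fin n) ℝ) (hQ : Q.PosSemidef) (hQ' : Q'.PosSemidef)
    (P P' : ℕ → Matrix (Fin n) (Fin n) ℝ)
    (hPN : P N = Q) (hP'N : P' N = Q')
    (hPiter : ∀ t, 1 ≤ t → t ≤ N - 1 →
      P t = Aᵀ * P (t + 1) * A + Q -
        Aᵀ * P (t + 1) * B * (Bᵀ * P (t + 1) * B + 1)⁻¹ * (Bᵀ * P (t + 1) * A))
    (hP'iter : ∀ t, 1 ≤ t → t ≤ N - 1 →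
      P' t = Aᵀ * P' (t + 1) * A + Q' -
        Aᵀ * P' (t + 1) * B * (Bᵀ * P' (t + 1) * B + 1)⁻¹ * (Bᵀ * P' (t + 1) * A))
    (hBP : ∀ t, 2 ≤ t → t ≤ N → Bᵀ * P t = Bᵀ * P' t) :
    Q = Q' ∧ ∀ t, 1 ≤ t → t ≤ N → P t = P' t := by
  have hQs : Qᵀ = Q := by
    rw [← Matrix.conjTranspose_eq_transpose_of_trivial]; exact hQ.1
  have hQ's : Q'ᵀ = Q' := by
    rw [← Matrix.conjTranspose_eq_transpose_of_trivial]; exact hQ'.1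
  -- symmetry of the Riccati iterates, by downward induction
  have symstep : ∀ (R : ℕ → Matrix (Fin n) (Fin n) ℝ) (Q₀ : Matrix (Fin n) (Fin n) ℝ),
      Q₀ᵀ = Q₀ →
      (∀ t, 1 ≤ t → t ≤ N - 1 →
        R t = Aᵀ * R (t + 1) * A + Q₀ -
          Aᵀ * R (t + 1) * B * (Bᵀ * R (t + 1) * B + 1)⁻¹ * (Bᵀ * R (t + 1) * A)) →
      ∀ t, 1 ≤ t → t ≤ N - 1 → (R (t+1))ᵀ = R (t+1) → (R t)ᵀ = R t := by
    intro R Q₀ hQ₀ hiter t h1 h2 hS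
    rw [hiter t h1 h2]
    have hM : (Bᵀ * R (t+1) * B + 1)ᵀ = Bᵀ * R (t+1) * B + 1 := by
      simp [Matrix.transpose_add, Matrix.transpose_mul, Matrix.transpose_one, hS,
        Matrix.mul_assoc]
    simp only [Matrix.transpose_sub, Matrix.transpose_add, Matrix.transpose_mul,
      Matrix.transpose_transpose, Matrix.transpose_nonsing_inv, hS, hQ₀, hM]
    simp [Matrix.mul_assoc]
  have sym : ∀ k, k ≤ N - 1 → (P (N - k))ᵀ = P (N - k) ∧ (P' (N - k))ᵀ = P' (N - k) := by
    intro k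
    induction k with
    | zero =>
      intro _
      simp only [Nat.sub_zero, hPN, hP'N]
      exact ⟨hQs, hQ's⟩
    | succ k ih =>
      intro hk
      have hk' : k ≤ N - 1 := by omega
      have hidx : N - (k + 1) + 1 = N - k := by omega
      have h1 : 1 ≤ N - (k + 1) := by omega
      have h2 : N - (k + 1) ≤ N - 1 := by omega
      obtain ⟨ihP, ihP'⟩ := ih hk'
      constructor
      · exact symstep P Q hQs hPiter _ h1 h2 (by rw [hidx]; exact ihP)
      · exact symstep P' Q' hQ's hP'iter _ h1 h2 (by rw [hidx]; exact ihP')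
  have symt : ∀ t, 1 ≤ t → t ≤ N → (P t)ᵀ = P t ∧ (P' t)ᵀ = P' t := by
    intro t h1 h2
    have : t = N - (N - t) := by omega
    rw [this]; exact sym (N - t) (by omega)
  set E := Q - Q' with hE
  -- difference recursion
  have diffrec : ∀ t, 1 ≤ t → t ≤ N - 1 →
      P t - P' t = Aᵀ * (P (t + 1) - P' (t + 1)) * A + E := by
    intro t h1 h2
    have hB1 : Bᵀ * P (t + 1) = Bᵀ * P' (t + 1) := hBP (t + 1) (by omega) (by omega)
    obtain ⟨hS, hS'⟩ := symt (t + 1) (by omega) (by omega)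
    have hAB : Aᵀ * P (t + 1) * B = Aᵀ * P' (t + 1) * B := by
      have : (Bᵀ * P (t + 1) * A)ᵀ = (Bᵀ * P' (t + 1) * A)ᵀ := by rw [hB1]
      simpa [Matrix.transpose_mul, Matrix.transpose_transpose, hS, hS',
        Matrix.mul_assoc] using this
    rw [hPiter t h1 h2, hP'iter t h1 h2, hB1, hAB]
    simp only [hE, Matrix.mul_sub, Matrix.sub_mul]
    abel
  have hBt : ∀ t, 2 ≤ t → t ≤ N → Bᵀ * (P t - P' t) = 0 := by
    intro t h1 h2
    rw [Matrix.mul_sub, hBP t h1 h2, sub_self]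
  -- telescoping identity
  have tele : ∀ k, 1 ≤ k → k ≤ N - 1 →
      P (N - k) - P' (N - k) = (Aᵀ) ^ k * E * A ^ k + (P (N - k + 1) - P' (N - k + 1)) := by
    intro k
    induction k with
    | zero => omega
    | succ k ih =>
      intro _ hk
      rcases Nat.eq_zero_or_pos k with rfl | hkpos
      · have hidx : N - 1 + 1 = N := by omega
        have h := diffrec (N - 1) (by omega) (by omega)
        show P (N - 1) - P' (N - 1) = Aᵀ ^ 1 * E * A ^ 1 + (P (N - 1 + 1) - P' (N - 1 + 1))
        rw [hidx] at h ⊢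
        rw [h, hPN, hP'N, ← hE]
        simp [pow_one]
      · have hidx : N - (k + 1) + 1 = N - k := by omega
        have hrec := diffrec (N - (k + 1)) (by omega) (by omega)
        rw [hidx] at hrec
        have hih := ih hkpos (by omega)
        have hrec2 := diffrec (N - k) (by omega) (by omega)
        rw [hidx]
        conv_lhs => rw [hrec, hih]
        conv_rhs => rw [hrec2]
        rw [pow_succ' Aᵀ, pow_succ A]
        simp only [Matrix.mul_add, Matrix.add_mul, Matrix.mul_assoc]
        abel
  -- key vanishing
  have hdet : ∀ k : ℕ, IsUnit (A ^ k).det := by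
    intro k
    rw [← Matrix.isUnit_iff_isUnit_det]
    exact hA.pow k
  have key : ∀ k, k + 2 ≤ N → Bᵀ * ((Aᵀ) ^ k * E * A ^ k) = 0 := by
    intro k hk
    rcases Nat.eq_zero_or_pos k with rfl | hkpos
    · simpa [hPN, hP'N] using hBt N (by omega) (le_refl N)
    · have h1 := hBt (N - k) (by omega) (by omega)
      have h2 := hBt (N - k + 1) (by omega) (by omega)
      rw [tele k hkpos (by omega)] at h1
      rw [Matrix.mul_add, h2, add_zero] at h1
      exact h1
  have hEs : Eᵀ = E := by rw [hE, Matrix.transpose_sub, hQs, hQ's]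
  have hEAB : ∀ k, k < n → E * (A ^ k * B) = 0 := by
    intro k hkn
    have hk2 : k + 2 ≤ N := by omega
    have h0 := key k hk2
    -- cancel A^k on the right
    have h1 : Bᵀ * ((Aᵀ) ^ k * E) = 0 := by
      have := congrArg (· * (A ^ k)⁻¹) h0
      simp only [Matrix.mul_assoc, Matrix.zero_mul] at this
      rwa [Matrix.mul_nonsing_inv _ (hdet k), Matrix.mul_one] at this
    have h2 := congrArg Matrix.transpose h1
    simpa [Matrix.transpose_mul, Matrix.transpose_pow, Matrix.transpose_transpose,
      hEs, Matrix.transpose_zero, Matrix.mul_assoc] using h2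
  have hE0 : E = 0 := by
    ext i j
    have hrow : (fun j => E i j) = 0 := by
      apply hctrb
      intro k hkn
      funext l
      have := congrFun (congrFun (hEAB k hkn) i) l
      simpa [Matrix.mul_apply, Matrix.vecMul, dotProduct] using this
    exact congrFun hrow j
  have hQQ' : Q = Q' := by
    have := sub_eq_zero.mp hE0
    exact this
  refine ⟨hQQ', ?_⟩
  have zero : ∀ k, k ≤ N - 1 → P (N - k) = P' (N - k) := by
    intro k
    induction k with
    | zero => intro _; simp only [Nat.sub_zero, hPN, hP'N, hQQ']
    | succ k ih =>
      intro hk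
      have hidx : N - (k + 1) + 1 = N - k := by omega
      have hrec := diffrec (N - (k + 1)) (by omega) (by omega)
      rw [hidx, ih (by omega), sub_self, hE0, Matrix.mul_zero, Matrix.zero_mul,
        add_zero] at hrec
      exact sub_eq_zero.mp hrec
  intro t h1 h2
  have ht : t = N - (N - t) := by omega
  rw [ht]
  exact zero (N - t) (by omega)
end
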